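/- Assume that the compositional inverse ψ = φ^⟨-1⟩ of φ satisfies ψ(t) = t·h(ψ(t)). Then for every nonnegative integer s and all 1 ≤ k ≤ n, [A^s]_{k,n} = (a_k/a_n)·C(n,k)·(d/dt)^{n-k}_{t=0}[ (g(ψ(t)))^s ], where C(n,k) is the binomial coefficient. -/

import Mathlib

open PowerSeries Finset

noncomputable section

/-- Product of two infinite matrices of complex numbers (indexed by positive integers,
upper triangular): `[A·B]_{k,n} = ∑_{j=k}^{n} [A]_{k,j}·[B]_{j,n}`. -/
def triMul (A B : ℕ → ℕ → ℂ) : ℕ → ℕ → ℂ :=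
  fun k n => ∑ j ∈ Finset.Icc k n, A k j * B j n

/-- The identity matrix. -/
def triId : ℕ → ℕ → ℂ := fun k n => if k = n then 1 else 0

/-- Powers of a matrix: `A^0 = I`, `A^{s+1} = A^s · A`. -/
def triPow (A : ℕ → ℕ → ℂ) : ℕ → ℕ → ℕ → ℂ
  | 0 => triId
  | s + 1 => triMul (triPow A s) A

/-- Composition `F ∘ G` of formal power series (intended for `G` with zero
constant coefficient): the coefficient of `t^n` is `∑_{j=0}^{n} F_j · [t^n](G^j)`. -/
def psComp (F G : PowerSeries ℂ) : PowerSeries ℂ :=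
  PowerSeries.mk fun n =>
    ∑ j ∈ Finset.range (n + 1), (PowerSeries.coeff j F) * (PowerSeries.coeff n (G ^ j))

/-- Iterated composition: `φ^⟨0⟩ = t`, `φ^⟨s+1⟩ = φ^⟨s⟩ ∘ φ`. -/
def iterComp (φ : PowerSeries ℂ) : ℕ → PowerSeries ℂ
  | 0 => PowerSeries.X
  | s + 1 => psComp (iterComp φ s) φ

/-! Substituting `φ` into `ψ = X·h(ψ)` gives `φ·h = X`. For such a pair the residue identity
`[tⁿ] h^{n+1}·(W∘φ)' = (n+1)·[t^{n+1}] W` holds: on `W = X^i` it reduces, via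
`h^{n+1}·(φ^i)' = i·X^{i-1}·h^{n+1-i}·(h·φ')` and `h·φ' = 1 - φ·h'`, to
`[t^{r+1}] h^{r+1} = [t^r] h^r·h'`, i.e. to reading off a coefficient of `(h^{r+1})'` in two ways.
Applied to `W = X^k·(g∘ψ)`, whose pullback along `φ` is `φ^k·g`, it shows that `A` is the
Toeplitz matrix of `g∘ψ` conjugated by `diag(a_k/k!)`; hence `A^s` is the Toeplitz matrix of
`(g∘ψ)^s` conjugated in the same way. -/

namespace PowerSeries

theorem coeff_sub_mul_eq_sum_Icc {R : Type*} [Semiring R] (P Q : R⟦X⟧) {k n : ℕ}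
    (hkn : k ≤ n) :
    coeff (n - k) (P * Q) = ∑ j ∈ Icc k n, coeff (j - k) P * coeff (n - j) Q := by
  rw [coeff_mul, Nat.sum_antidiagonal_eq_sum_range_succ_mk, ← Ico_add_one_right_eq_Icc,
    sum_Ico_eq_sum_range, show n + 1 - k = n - k + 1 by omega]
  exact sum_congr rfl fun i _ => by rw [Nat.add_sub_cancel_left, Nat.sub_sub]

variable {R : Type*} [CommRing R] [IsAddTorsionFree R]

theorem coeff_succ_pow_succ_eq_coeff_pow_mul_derivative (f : R⟦X⟧) (r : ℕ) :
    coeff (r + 1) (f ^ (r + 1)) = coeff r (f ^ r * d⁄dX R f) := by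
  have h := coeff_derivative (f ^ (r + 1)) r
  rw [derivative_pow, Nat.add_sub_cancel, mul_assoc, ← map_natCast (C (R := R)), coeff_C_mul,
    Nat.cast_add_one] at h
  apply nsmul_right_injective r.succ_ne_zero
  simp only [nsmul_eq_mul, Nat.cast_succ]
  linear_combination -h

variable {φ h : R⟦X⟧}

theorem coeff_pow_succ_mul_derivative_of_mul_eq_X (hφh : φ * h = X)
    (hφ0 : constantCoeff φ = 0) (r : ℕ) :
    coeff r (h ^ (r + 1) * d⁄dX R φ) = if r = 0 then 1 else 0 := by
  have hhφ : h * d⁄dX R φ = 1 - φ * d⁄dX R h := by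
    have := congrArg (d⁄dX R) hφh
    rw [Derivation.leibniz, derivative_X, smul_eq_mul, smul_eq_mul] at this
    linear_combination this
  rcases r with _ | r
  · rw [zero_add, pow_one, hhφ, coeff_zero_eq_constantCoeff_apply]
    simp [hφ0]
  · have : h ^ (r + 2) * d⁄dX R φ = h ^ (r + 1) - X * (h ^ r * d⁄dX R h) := by
      rw [← hφh]; linear_combination h ^ (r + 1) * hhφ
    rw [this, map_sub, coeff_succ_X_mul, coeff_succ_pow_succ_eq_coeff_pow_mul_derivative,
      sub_self, if_neg r.succ_ne_zero]

theorem coeff_pow_succ_mul_derivative_pow_of_mul_eq_X (hφh : φ * h = X)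
    (hφ0 : constantCoeff φ = 0) (n i : ℕ) :
    coeff n (h ^ (n + 1) * d⁄dX R (φ ^ i)) = if i = n + 1 then (n + 1 : R) else 0 := by
  rcases i with _ | j
  · simp
  simp only [derivative_pow, Nat.add_sub_cancel, Nat.add_right_cancel_iff]
  rcases le_or_gt j n with hjn | hnj
  · obtain ⟨r, rfl⟩ := Nat.exists_eq_add_of_le hjn
    have : h ^ (j + r + 1) * (((j + 1 : ℕ) : R⟦X⟧) * φ ^ j * d⁄dX R φ) =
        C ((j + 1 : ℕ) : R) * ((h ^ (r + 1) * d⁄dX R φ) * X ^ j) := by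
      rw [← hφh, map_natCast]; ring
    rw [this, coeff_C_mul, add_comm j r, coeff_mul_X_pow,
      coeff_pow_succ_mul_derivative_of_mul_eq_X hφh hφ0]
    by_cases hr : r = 0 <;> simp [hr]
  · rw [if_neg hnj.ne']
    refine X_pow_dvd_iff.mp ?_ n n.lt_succ_self
    have hX : X ^ (n + 1) ∣ φ ^ j :=
      (pow_dvd_pow X hnj).trans (pow_dvd_pow_of_dvd (X_dvd_iff.mpr hφ0) j)
    exact ((hX.mul_left _).mul_right _).mul_left _

theorem coeff_pow_succ_mul_derivative_subst_of_mul_eq_X (hφh : φ * h = X)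
    (hφ0 : constantCoeff φ = 0) (W : R⟦X⟧) (n : ℕ) :
    coeff n (h ^ (n + 1) * d⁄dX R (W.subst φ)) = (n + 1) * coeff (n + 1) W := by
  have hφ : HasSubst φ := .of_constantCoeff_zero' hφ0
  set V : R⟦X⟧ := mk fun i ↦ coeff (i + (n + 2)) W
  have htail : coeff n (h ^ (n + 1) * d⁄dX R (φ ^ (n + 2) * V.subst φ)) = 0 := by
    refine X_pow_dvd_iff.mp (Dvd.dvd.mul_left ?_ _) n n.lt_succ_self
    have : d⁄dX R (φ ^ (n + 2) * V.subst φ) = φ ^ (n + 1) *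
        (φ * d⁄dX R (V.subst φ) + V.subst φ * (n + 2) * d⁄dX R φ) := by
      rw [Derivation.leibniz, derivative_pow, smul_eq_mul, smul_eq_mul]; push_cast; ring
    rw [this]
    exact (pow_dvd_pow_of_dvd (X_dvd_iff.mpr hφ0) _).mul_right _
  have hhead :
      Polynomial.aeval φ (trunc (n + 2) W) = ∑ i ∈ range (n + 2), coeff i W • φ ^ i := by
    rw [Polynomial.aeval_def, eval₂_trunc_eq_sum_range]
    simp only [Algebra.smul_def]
  conv_lhs => rw [eq_X_pow_mul_shift_add_trunc (n + 2) W]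
  rw [subst_add hφ, subst_mul hφ, subst_pow hφ,
    subst_X hφ, subst_coe hφ, map_add, mul_add, map_add, htail, zero_add, hhead, map_sum,
    mul_sum, map_sum]
  simp only [Derivation.map_smul, mul_smul_comm, LinearMap.map_smul,
    coeff_pow_succ_mul_derivative_pow_of_mul_eq_X hφh hφ0, smul_eq_mul, mul_ite, mul_zero,
    sum_ite_eq', mem_range]
  rw [if_pos (by omega), mul_comm]

theorem coeff_pow_succ_mul_derivative_pow_mul_subst_of_mul_eq_X (hφh : φ * h = X)
    (hφ0 : constantCoeff φ = 0) (G : R⟦X⟧) {m j : ℕ} (hjm : j ≤ m + 1) :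
    coeff m (h ^ (m + 1) * d⁄dX R (φ ^ j * G.subst φ)) = (m + 1) * coeff (m + 1 - j) G := by
  have hφ : HasSubst φ := .of_constantCoeff_zero' hφ0
  have hW : φ ^ j * G.subst φ = (X ^ j * G).subst φ := by
    rw [subst_mul hφ, subst_pow hφ, subst_X hφ]
  rw [hW, coeff_pow_succ_mul_derivative_subst_of_mul_eq_X hφh hφ0, coeff_X_pow_mul', if_pos hjm]

end PowerSeries

theorem psComp_eq_subst {F G : ℂ⟦X⟧} (hG : constantCoeff G = 0) : psComp F G = F.subst G := by
  ext n
  rw [coeff_subst' (.of_constantCoeff_zero' hG), psComp, coeff_mk,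
    finsum_eq_sum_of_support_subset (s := range (n + 1))]
  · simp only [smul_eq_mul]
  · intro d hd
    rw [Function.mem_support] at hd
    rw [coe_range, Set.mem_Iio, Nat.lt_succ_iff]
    by_contra! hnd
    exact hd (by rw [X_pow_dvd_iff.mp (pow_dvd_pow_of_dvd (X_dvd_iff.mpr hG) d) n hnd, smul_zero])

theorem triPow_eq_of_eq_div_mul_coeff {A : ℕ → ℕ → ℂ} {b : ℕ → ℂ}
    (hb : ∀ j, 1 ≤ j → b j ≠ 0) {F : ℂ⟦X⟧}
    (hA : ∀ j n, 1 ≤ j → j ≤ n → A j n = b j / b n * coeff (n - j) F)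
    (s : ℕ) {k n : ℕ} (hk : 1 ≤ k) (hkn : k ≤ n) :
    triPow A s k n = b k / b n * coeff (n - k) (F ^ s) := by
  induction s generalizing n with
  | zero =>
    rcases hkn.eq_or_lt with rfl | hlt
    · simp [triPow, triId, hb k hk]
    · simp [triPow, triId, hlt.ne, coeff_one, Nat.sub_ne_zero_of_lt hlt]
  | succ s ih =>
    rw [triPow, triMul, pow_succ, coeff_sub_mul_eq_sum_Icc _ _ hkn, mul_sum]
    refine sum_congr rfl fun j hj => ?_
    rw [mem_Icc] at hj
    rw [ih hj.1, hA j n (hk.trans hj.1) hj.2]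
    field_simp [hb j (hk.trans hj.1)]

set_option linter.deprecated false in
theorem stmt7_general (a : ℕ → ℂ) (ha : ∀ n, 1 ≤ n → a n ≠ 0)
    (φ g h : PowerSeries ℂ)
    (hφ0 : constantCoeff φ = 0)
    (ψ : PowerSeries ℂ) (hψ0 : constantCoeff ψ = 0)
    (hψφ : psComp ψ φ = PowerSeries.X)
    (hψ : ψ = PowerSeries.X * psComp h ψ)
    (A : ℕ → ℕ → ℂ)
    (hA : ∀ k n, 1 ≤ k → k ≤ n →
      A k n = a k / a n * (1 / k.factorial) *
        (((n - 1).factorial : ℂ) * coeff (n - 1) (h ^ n * derivativeFun (φ ^ k * g))))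
    (s : ℕ) (k n : ℕ) (hk : 1 ≤ k) (hkn : k ≤ n) :
    triPow A s k n = a k / a n * (n.choose k : ℂ) *
      (((n - k).factorial : ℂ) * coeff (n - k) ((psComp g ψ) ^ s)) := by
  have hφ : HasSubst φ := .of_constantCoeff_zero' hφ0
  have hψs : HasSubst ψ := .of_constantCoeff_zero' hψ0
  rw [psComp_eq_subst hφ0] at hψφ
  rw [psComp_eq_subst hψ0] at hψ ⊢
  set G : ℂ⟦X⟧ := g.subst ψ
  have hφh : φ * h = X := by
    rw [← hψφ, hψ, subst_mul hφ, subst_X hφ, subst_comp_subst_apply hψs hφ, hψφ, X_subst]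
  have hg : G.subst φ = g := by rw [subst_comp_subst_apply hψs hφ, hψφ, X_subst]
  have hb : ∀ j, 1 ≤ j → a j / j.factorial ≠ 0 := fun j hj ↦
    div_ne_zero (ha j hj) (Nat.cast_ne_zero.mpr j.factorial_ne_zero)
  refine (triPow_eq_of_eq_div_mul_coeff hb (F := G) (fun j n hj hjn ↦ ?_) s hk hkn).trans ?_
  · obtain ⟨m, rfl⟩ : ∃ m, n = m + 1 := ⟨n - 1, by omega⟩
    rw [hA j (m + 1) hj hjn, Nat.add_sub_cancel]
    -- `derivativeFun` is the underlying function of the derivation `d⁄dX ℂ`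
    change _ * (_ * coeff m (h ^ (m + 1) * d⁄dX ℂ (φ ^ j * g))) = _
    rw [← hg, coeff_pow_succ_mul_derivative_pow_mul_subst_of_mul_eq_X hφh hφ0 G hjn,
      Nat.factorial_succ]
    field_simp [ha (m + 1) (by omega)]
    push_cast; ring
  · rw [Nat.cast_choose ℂ hkn]
    field_simp [ha n (hk.trans hkn), Nat.cast_ne_zero.mpr (n - k).factorial_ne_zero]

/-- Corollary: if the compositional inverse `ψ` of `φ` satisfies `ψ(t) = t·h(ψ(t))`, then
`[A^s]_{k,n} = (a_k/a_n)·C(n,k)·(d/dt)^{n-k}_{t=0}[(g(ψ(t)))^s]`. -/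
theorem stmt7 (a : ℕ → ℂ) (ha : ∀ n, 1 ≤ n → a n ≠ 0)
    (φ g h : PowerSeries ℂ)
    (hφ0 : constantCoeff φ = 0)
    (hne : constantCoeff (derivativeFun φ) * constantCoeff g * constantCoeff h ≠ 0)
    (ψ : PowerSeries ℂ) (hψ0 : constantCoeff ψ = 0)
    (hψφ : psComp ψ φ = PowerSeries.X) (hφψ : psComp φ ψ = PowerSeries.X)
    (hψ : ψ = PowerSeries.X * psComp h ψ)
    (A : ℕ → ℕ → ℂ)
    (hAtri : ∀ k n, n < k → A k n = 0)
    (hA : ∀ k n, 1 ≤ k → k ≤ n →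
      A k n = a k / a n * (1 / k.factorial) *
        (((n - 1).factorial : ℂ) * coeff (n - 1) (h ^ n * derivativeFun (φ ^ k * g))))
    (s : ℕ) (k n : ℕ) (hk : 1 ≤ k) (hkn : k ≤ n) :
    triPow A s k n = a k / a n * (n.choose k : ℂ) *
      (((n - k).factorial : ℂ) * coeff (n - k) ((psComp g ψ) ^ s)) :=
  stmt7_general a ha φ g h hφ0 ψ hψ0 hψφ hψ A hA s k n hk hkn
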